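/- Let R be a commutative ring, E a finitely generated projective R-module of rank r, and t : E → R an R-linear map. The Koszul complex K(t) = (Λ^• E, contraction by t) has Euler characteristic Σ_n (−1)^n [Λ^n E] = e(E) in K₀(R); in particular if t is surjective the Koszul complex is exact. -/

import Mathlib

set_option maxHeartbeats 1000000
set_option synthInstance.maxHeartbeats 1000000

/-!
STATEMENT 5: Let `R` be a commutative ring, `E` a finitely generated projective `R`-module
of rank `r`, and `t : E → R` an `R`-linear map.  The Koszul complex `K(t) = (Λ^• E,
contraction by t)` has Euler characteristic `Σₙ (−1)ⁿ [Λⁿ E] = e(E)` in `K₀(R)`; in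
particular, if `t` is surjective the Koszul complex is exact (exactness in degree `0`
meaning that `d₀ : Λ¹E → Λ⁰E` is surjective).
-/

universe u

/-- An index type bundling all `R`-modules (in universe `u`). -/
structure ModIdx (R : Type u) [CommRing R] : Type (u + 1) where
  carrier : Type u
  [acg : AddCommGroup carrier]
  [mod : Module R carrier]

attribute [instance] ModIdx.acg ModIdx.mod

variable (R : Type u) [CommRing R]

/-- Relations defining `K₀(R)`: `[P] = [P'] + [P'']` whenever `P ≅ P' ⊕ P''`, for finitely
generated projective modules. -/
def K0Rel : AddSubgroup (FreeAbelianGroup (ModIdx R)) :=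
  AddSubgroup.closure
    {a | ∃ P P' P'' : ModIdx R,
      Module.Finite R P.carrier ∧ Module.Projective R P.carrier ∧
      Module.Finite R P'.carrier ∧ Module.Projective R P'.carrier ∧
      Module.Finite R P''.carrier ∧ Module.Projective R P''.carrier ∧
      Nonempty (P.carrier ≃ₗ[R] P'.carrier × P''.carrier) ∧
      a = FreeAbelianGroup.of P - FreeAbelianGroup.of P' - FreeAbelianGroup.of P''}

/-- The Grothendieck group `K₀(R)` of finitely generated projective `R`-modules. -/
def K0 := FreeAbelianGroup (ModIdx R) ⧸ K0Rel R

instance : AddCommGroup (K0 R) := inferInstanceAs (AddCommGroup (_ ⧸ K0Rel R))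

/-- The class `[M] ∈ K₀(R)` of a module. -/
def K0.cls (M : Type u) [AddCommGroup M] [Module R M] : K0 R :=
  QuotientAddGroup.mk (FreeAbelianGroup.of ⟨M⟩)

/-- The wedge `v₀ ∧ ⋯ ∧ vₙ₋₁` as an element of the `n`-th exterior power. -/
noncomputable def wedge (E : Type u) [AddCommGroup E] [Module R E] (n : ℕ)
    (v : Fin n → E) : ⋀[R]^n E :=
  ⟨ExteriorAlgebra.ιMulti R n v, ExteriorAlgebra.ιMulti_range R n ⟨v, rfl⟩⟩

/-- `d` is the Koszul differential (contraction) associated to the cosection `t : E → R`: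
on wedges it is given by
`d (v₀ ∧ ⋯ ∧ vₙ) = Σᵢ (−1)ⁱ t(vᵢ) • v₀ ∧ ⋯ ∧ v̂ᵢ ∧ ⋯ ∧ vₙ`. -/
def IsKoszulDiff (E : Type u) [AddCommGroup E] [Module R E] (t : E →ₗ[R] R)
    (d : ∀ n : ℕ, (⋀[R]^(n + 1) E) →ₗ[R] (⋀[R]^n E)) : Prop :=
  ∀ (n : ℕ) (v : Fin (n + 1) → E),
    d n (wedge R E (n + 1) v) =
      ∑ i : Fin (n + 1),
        ((-1 : ℤ) ^ (i : ℕ)) • t (v i) • wedge R E n (fun j => v (i.succAbove j))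

/-- The Euler class of a finitely generated projective module of rank `≤ r`. -/
noncomputable def eulerClass (E : Type u) [AddCommGroup E] [Module R E] (r : ℕ) : K0 R :=
  ∑ n ∈ Finset.range (r + 1), ((-1 : ℤ) ^ n) • K0.cls R (⋀[R]^n E)

/-!
The Euler characteristic identity holds by the definition of `eulerClass`. For exactness, a
Koszul differential is the restriction to `⋀ⁿ⁺¹E` of the contraction `t ⌋ ·` on the exterior
algebra, which squares to zero. If `t e = 1`, then `t ⌋ (e ∧ x) = x - e ∧ (t ⌋ x)`, so wedging
with `e` is a contracting homotopy of the Koszul complex.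
-/

namespace ExteriorAlgebra

variable {R} {M : Type*} [AddCommGroup M] [Module R M]

open CliffordAlgebra in
theorem contractLeft_ιMulti_succ (t : Module.Dual R M) (n : ℕ) (v : Fin (n + 1) → M) :
    contractLeft (Q := 0) t (ιMulti R (n + 1) v) =
      ∑ i : Fin (n + 1), ((-1 : ℤ) ^ (i : ℕ)) • t (v i) • ιMulti R n (v ∘ i.succAbove) := by
  induction n with
  | zero => simp [Algebra.algebraMap_eq_smul_one]
  | succ n ih =>
    rw [ιMulti_succ_apply, contractLeft_ι_mul, ih, Fin.sum_univ_succ (n := n + 1), Finset.mul_sum,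
      sub_eq_add_neg, ← Finset.sum_neg_distrib]
    congr 1
    · simp [Matrix.vecTail, Function.comp_def]
    · refine Finset.sum_congr rfl fun i _ => ?_
      rw [ιMulti_succ_apply (v := v ∘ i.succ.succAbove)]
      simp [Matrix.vecTail, Function.comp_def, Fin.succ_succAbove_succ, pow_succ,
        ((Commute.neg_one_left _).pow_left _).left_comm]

theorem ι_mul_mem_exteriorPower_succ (m : M) {n : ℕ} {x : ExteriorAlgebra R M}
    (hx : x ∈ ⋀[R]^n M) : ι R m * x ∈ ⋀[R]^(n + 1) M := by
  rw [exteriorPower, pow_succ']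
  exact Submodule.mul_mem_mul (LinearMap.mem_range_self _ m) hx

end ExteriorAlgebra

namespace IsKoszulDiff

open ExteriorAlgebra CliffordAlgebra

variable {R} {E : Type u} [AddCommGroup E] [Module R E] {t : E →ₗ[R] R}
  {d : ∀ n : ℕ, (⋀[R]^(n + 1) E) →ₗ[R] (⋀[R]^n E)}

theorem coe_apply (hd : IsKoszulDiff R E t d) (n : ℕ) (x : ⋀[R]^(n + 1) E) :
    (d n x : ExteriorAlgebra R E) = contractLeft (Q := 0) t x := by
  suffices (⋀[R]^n E).subtype ∘ₗ d n = contractLeft t ∘ₗ (⋀[R]^(n + 1) E).subtype from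
    LinearMap.congr_fun this x
  ext v
  change (d n (wedge R E (n + 1) v) : ExteriorAlgebra R E) = contractLeft t (ιMulti R (n + 1) v)
  rw [hd n v, contractLeft_ιMulti_succ, Submodule.coe_sum]
  rfl

theorem apply_apply_eq_zero (hd : IsKoszulDiff R E t d) (n : ℕ) (x : ⋀[R]^(n + 2) E) :
    d n (d (n + 1) x) = 0 :=
  Subtype.ext <| by rw [coe_apply hd, coe_apply hd, contractLeft_contractLeft]; rfl

theorem apply_ι_mul_eq_self (hd : IsKoszulDiff R E t d) {e : E} (he : t e = 1) {n : ℕ}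
    (x : ⋀[R]^n E) (hx : contractLeft (Q := 0) t (x : ExteriorAlgebra R E) = 0) :
    d n ⟨ι R e * x, ι_mul_mem_exteriorPower_succ e x.2⟩ = x :=
  Subtype.ext <| by rw [coe_apply hd]; simp [contractLeft_ι_mul, he, hx]

theorem surjective_zero_of_apply_eq_one (hd : IsKoszulDiff R E t d) {e : E} (he : t e = 1) :
    Function.Surjective (d 0) := by
  rintro ⟨x, hx⟩
  obtain ⟨c, rfl⟩ : ∃ c, algebraMap R _ c = x := Submodule.mem_one.mp (by simpa using hx)
  exact ⟨_, hd.apply_ι_mul_eq_self he _ (contractLeft_algebraMap (Q := 0) t c)⟩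

theorem range_succ_eq_ker_of_apply_eq_one (hd : IsKoszulDiff R E t d) {e : E} (he : t e = 1)
    (n : ℕ) :
    LinearMap.range (d (n + 1)) = LinearMap.ker (d n) := by
  refine le_antisymm ?_ fun x hx => ⟨_, hd.apply_ι_mul_eq_self he x ?_⟩
  · rintro _ ⟨x, rfl⟩
    exact hd.apply_apply_eq_zero n x
  · rw [← coe_apply hd, LinearMap.mem_ker.mp hx, ZeroMemClass.coe_zero]

end IsKoszulDiff

theorem koszul_eulerChar_and_exactness
    (E : Type u) [AddCommGroup E] [Module R E]
    (r : ℕ)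
    (t : E →ₗ[R] R)
    (d : ∀ n : ℕ, (⋀[R]^(n + 1) E) →ₗ[R] (⋀[R]^n E))
    (hd : IsKoszulDiff R E t d) :
    (∑ n ∈ Finset.range (r + 1), ((-1 : ℤ) ^ n) • K0.cls R (⋀[R]^n E)) =
      eulerClass R E r ∧
    (Function.Surjective t →
      Function.Surjective (d 0) ∧
        ∀ n : ℕ, LinearMap.range (d (n + 1)) = LinearMap.ker (d n)) := by
  refine ⟨rfl, fun ht => ?_⟩
  obtain ⟨e, he⟩ := ht 1
  exact ⟨hd.surjective_zero_of_apply_eq_one he, hd.range_succ_eq_ker_of_apply_eq_one he⟩
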